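/- Let $\{m_n\}_{n\ge 0}$ be non-decreasing positive integers with $m_0 = d$, $W_n \in \mathbb{R}^{m_n \times m_{n-1}}$, $b_n \in \mathbb{R}^{m_n}$. If $W_n = I_{m_n,m_{n-1}} + P_n$ with $\sum_{n=1}^\infty \|P_n\|_p < \infty$ and $\sum_{n=1}^\infty \|b_n\|_p < \infty$, then the ReLU neural networks $\mathcal{N}_n(x) := \left(\bigodot_{i=1}^n \sigma(W_i \cdot + b_i)\right)(x)$, after zero-padding to elements of $\ell^p$, converge pointwise on $[0,1]^d$: for each $x \in [0,1]^d$, the sequence $\tilde{\mathcal{N}}_n(x) \in \ell^p$ is convergent. -/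

import Mathlib

open scoped ENNReal
open Matrix Filter

noncomputable section


/-- The `m' × m` matrix with the identity on top and zero rows below. -/
def Ipad (m' m : ℕ) : Matrix (Fin m') (Fin m) ℝ :=
  Matrix.of fun i j => if (i : ℕ) = (j : ℕ) then 1 else 0

/-- The diagonal entries of an activation matrix are 0 or 1. -/
def ZeroOne {m : ℕ} (J : Fin m → ℝ) : Prop := ∀ i, J i = 0 ∨ J i = 1

/-- A matrix viewed as a bounded linear operator between `ℓ^p` spaces `ℝ^a → ℝ^b`. -/
def matCLM (p : ℝ≥0∞) [Fact (1 ≤ p)] {a b : ℕ} (A : Matrix (Fin b) (Fin a) ℝ) :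
    PiLp p (fun _ : Fin a => ℝ) →L[ℝ] PiLp p (fun _ : Fin b => ℝ) :=
  LinearMap.toContinuousLinearMap <|
    (WithLp.linearEquiv p ℝ (Fin b → ℝ)).symm.toLinearMap ∘ₗ
      A.mulVecLin ∘ₗ (WithLp.linearEquiv p ℝ (Fin a → ℝ)).toLinearMap

/-- Zero-padding of a finite vector into `ℓ^p`. -/
def padLp (p : ℝ≥0∞) [Fact (1 ≤ p)] {m : ℕ} (x : Fin m → ℝ) : lp (fun _ : ℕ => ℝ) p :=
  ∑ i : Fin m, lp.single p (i : ℕ) (x i)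

/-- Zero-padding as a bounded linear operator `ℝ^m → ℓ^p`. -/
def padCLM (p : ℝ≥0∞) [Fact (1 ≤ p)] (m : ℕ) :
    PiLp p (fun _ : Fin m => ℝ) →L[ℝ] lp (fun _ : ℕ => ℝ) p :=
  LinearMap.toContinuousLinearMap
    { toFun := fun x => padLp p ((WithLp.linearEquiv p ℝ (Fin m → ℝ)) x)
      map_add' := by
        intro x y
        simp only [padLp, WithLp.linearEquiv_apply]
        rw [← Finset.sum_add_distrib]
        refine Finset.sum_congr rfl fun i _ => ?_
        apply lp.ext
        funext j
        by_cases h : j = (i : ℕ)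
        · subst h
          simp [lp.single_apply_self]
        · simp [lp.single_apply_ne p _ _ h]
      map_smul' := by
        intro c x
        simp only [padLp, WithLp.linearEquiv_apply, RingHom.id_apply, Finset.smul_sum]
        refine Finset.sum_congr rfl fun i _ => ?_
        rw [show (WithLp.addEquiv p (Fin m → ℝ)).toFun (c • x) i = c • (WithLp.addEquiv p (Fin m → ℝ)).toFun x i from rfl,
          lp.single_smul] }


/-- Componentwise ReLU. -/
def relu {m : ℕ} (x : Fin m → ℝ) : Fin m → ℝ := fun i => max (x i) 0

/-- The unit cube `[0,1]^d`. -/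
def cube (d : ℕ) : Set (Fin d → ℝ) := {x | ∀ i, x i ∈ Set.Icc (0:ℝ) 1}

variable {m : ℕ → ℕ}

/-- The deep ReLU network `N_n(x) = σ(W_n · + b_n) ∘ ⋯ ∘ σ(W_1 · + b_1) (x)`. -/
def net (W : ∀ n, Matrix (Fin (m (n+1))) (Fin (m n)) ℝ) (b : ∀ n, Fin (m (n+1)) → ℝ)
    (x : Fin (m 0) → ℝ) : ∀ n, Fin (m n) → ℝ
  | 0 => x
  | n+1 => relu (W n *ᵥ net W b x n + b n)

/-- The product `J_n W_n ⋯ J_1 W_1`. -/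
def prodJW (W : ∀ n, Matrix (Fin (m (n+1))) (Fin (m n)) ℝ)
    (J : ∀ n, Fin (m (n+1)) → ℝ) : ∀ n, Matrix (Fin (m n)) (Fin (m 0)) ℝ
  | 0 => 1
  | n+1 => (Matrix.diagonal (J n) * W n) * prodJW W J n

/-- The product `J_{i+t} W_{i+t} ⋯ J_{i+1} W_{i+1}` (product of `t` factors starting at layer `i+1`). -/
def prodJWFrom (W : ∀ n, Matrix (Fin (m (n+1))) (Fin (m n)) ℝ)
    (J : ∀ n, Fin (m (n+1)) → ℝ) (i : ℕ) : ∀ t, Matrix (Fin (m (i+t))) (Fin (m i)) ℝ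
  | 0 => (1 : Matrix (Fin (m i)) (Fin (m i)) ℝ)
  | t+1 => (Matrix.diagonal (J (i+t)) * W (i+t)) * prodJWFrom W J i t

/-- `∑_{i=1}^n (∏_{k=i+1}^n J_k W_k) J_i b_i`, defined by the recursion
`c_0 = 0`, `c_{n+1} = J_{n+1} W_{n+1} c_n + J_{n+1} b_{n+1}`. -/
def biasSum (W : ∀ n, Matrix (Fin (m (n+1))) (Fin (m n)) ℝ)
    (J : ∀ n, Fin (m (n+1)) → ℝ) (b : ∀ n, Fin (m (n+1)) → ℝ) : ∀ n, Fin (m n) → ℝ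
  | 0 => 0
  | n+1 => (Matrix.diagonal (J n) * W n) *ᵥ biasSum W J b n + Matrix.diagonal (J n) *ᵥ b n

/-- Activation domain of a one-layer network. -/
def actDom {a c : ℕ} (J : Fin c → ℝ) (W : Matrix (Fin c) (Fin a) ℝ) (b : Fin c → ℝ) :
    Set (Fin a → ℝ) :=
  {x | ∀ j, (J j = 1 → 0 < (W *ᵥ x + b) j) ∧ (J j ≠ 1 → (W *ᵥ x + b) j ≤ 0)}

/-- Activation domains of a multi-layer network. -/
def actDomMulti (W : ∀ n, Matrix (Fin (m (n+1))) (Fin (m n)) ℝ)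
    (J : ∀ n, Fin (m (n+1)) → ℝ) (b : ∀ n, Fin (m (n+1)) → ℝ) : ℕ → Set (Fin (m 0) → ℝ)
  | 0 => cube (m 0)
  | n+1 => {x ∈ actDomMulti W J b n | net W b x n ∈ actDom (J n) (W n) (b n)}

/-- The Toeplitz matrix of a filter mask `w = (w_0, …, w_s)`. -/
def toep (s mm : ℕ) (w : Fin (s+1) → ℝ) : Matrix (Fin (mm + s)) (Fin mm) ℝ :=
  Matrix.of fun i j =>
    if h : (j : ℕ) ≤ (i : ℕ) ∧ (i : ℕ) - (j : ℕ) ≤ s then w ⟨(i : ℕ) - (j : ℕ), by omega⟩ else 0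

/-- The widths of a CNN: `m_0 = d`, `m_n = m_{n-1} + s_n`. -/
def cnnWidth (d : ℕ) (s : ℕ → ℕ) : ℕ → ℕ
  | 0 => d
  | n+1 => cnnWidth d s n + s n

/-- The CNN: layer `n+1` maps `x ↦ σ(x * w^{(n+1)} + b_{n+1})`. -/
def cnnNet (d : ℕ) (s : ℕ → ℕ) (w : ∀ n, Fin (s n + 1) → ℝ)
    (b : ∀ n, Fin (cnnWidth d s (n+1)) → ℝ) (x : Fin d → ℝ) :
    ∀ n, Fin (cnnWidth d s n) → ℝ
  | 0 => x
  | n+1 => relu (fun i => (toep (s n) (cnnWidth d s n) (w n) *ᵥ cnnNet d s w b x n) i + b n i)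

/-! A layer differs from zero-padding by a summable perturbation: network outputs are
nonnegative, ReLU fixes nonnegative vectors and is `1`-Lipschitz, so
`‖N_{n+1} - I N_n‖_p ≤ ‖P_{n+1}‖_p ‖N_n‖_p + ‖b_{n+1}‖_p`. A discrete Grönwall inequality bounds
`‖N_n‖_p` by `(‖x‖_p + ∑ ‖b_k‖_p) exp (∑ ‖P_k‖_p)`, so the padded sequence has summable
increments and is Cauchy in the complete space `ℓ^p`. -/

lemma PiLp.norm_le_norm_of_forall_norm_le {ι : Type*} [Fintype ι] {β γ : ι → Type*}
    [∀ i, NormedAddCommGroup (β i)] [∀ i, NormedAddCommGroup (γ i)] {p : ℝ≥0∞} [Fact (1 ≤ p)]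
    {x : PiLp p β} {y : PiLp p γ} (h : ∀ i, ‖x i‖ ≤ ‖y i‖) : ‖x‖ ≤ ‖y‖ := by
  have hx := equiv_lpPiLp_norm (Equiv.lpPiLp.symm x)
  have hy := equiv_lpPiLp_norm (Equiv.lpPiLp.symm y)
  rw [Equiv.apply_symm_apply] at hx hy
  rw [hx, hy]
  exact lp.norm_mono (zero_lt_one.trans_le Fact.out).ne' h

lemma le_add_sum_mul_exp_sum_of_le_one_add_mul_add {a u v : ℕ → ℝ} (hu : ∀ n, 0 ≤ u n)
    (hv : ∀ n, 0 ≤ v n) (ha : 0 ≤ a 0) (h : ∀ n, a (n+1) ≤ (1 + u n) * a n + v n) (n : ℕ) :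
    a n ≤ (a 0 + ∑ k ∈ Finset.range n, v k) * Real.exp (∑ k ∈ Finset.range n, u k) := by
  induction n with
  | zero => simp
  | succ n ih =>
    have hA : 0 ≤ a 0 + ∑ k ∈ Finset.range n, v k :=
      add_nonneg ha (Finset.sum_nonneg fun k _ => hv k)
    have hU : 0 ≤ ∑ k ∈ Finset.range (n+1), u k := Finset.sum_nonneg fun k _ => hu k
    set A := a 0 + ∑ k ∈ Finset.range n, v k
    set E := Real.exp (∑ k ∈ Finset.range n, u k)
    calc a (n+1) ≤ (1 + u n) * a n + v n := h n
      _ ≤ (1 + u n) * (A * E) + v n := by gcongr; linarith [hu n]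
      _ ≤ Real.exp (u n) * (A * E) + v n * Real.exp (∑ k ∈ Finset.range (n+1), u k) := by
          gcongr
          · linarith [Real.add_one_le_exp (u n)]
          · exact le_mul_of_one_le_right (hv n) (Real.one_le_exp hU)
      _ = (a 0 + ∑ k ∈ Finset.range (n+1), v k) * Real.exp (∑ k ∈ Finset.range (n+1), u k) := by
          rw [Finset.sum_range_succ v, Finset.sum_range_succ u, Real.exp_add]
          ring

lemma exists_forall_le_of_le_one_add_mul_add {a u v : ℕ → ℝ} (hu : ∀ n, 0 ≤ u n)
    (hv : ∀ n, 0 ≤ v n) (ha : 0 ≤ a 0) (h : ∀ n, a (n+1) ≤ (1 + u n) * a n + v n)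
    (hus : Summable u) (hvs : Summable v) : ∃ M, ∀ n, a n ≤ M := by
  refine ⟨(a 0 + ∑' k, v k) * Real.exp (∑' k, u k), fun n => ?_⟩
  refine (le_add_sum_mul_exp_sum_of_le_one_add_mul_add hu hv ha h n).trans ?_
  gcongr
  · exact add_nonneg ha (tsum_nonneg hv)
  · exact hvs.sum_le_tsum _ fun k _ => hv k
  · exact hus.sum_le_tsum _ fun k _ => hu k

section Padding

variable (p : ℝ≥0∞) [Fact (1 ≤ p)]

lemma padLp_apply {k : ℕ} (x : Fin k → ℝ) (j : ℕ) :
    padLp p x j = if h : j < k then x ⟨j, h⟩ else 0 := by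
  simp only [padLp, lp.coeFn_sum, Finset.sum_apply, lp.single_apply, Pi.single_apply]
  split_ifs with h
  · rw [Finset.sum_eq_single_of_mem ⟨j, h⟩ (Finset.mem_univ _)] <;> aesop
  · exact Finset.sum_eq_zero fun i _ => if_neg fun hj : j = i => h (hj ▸ i.isLt)

lemma padLp_sub {k : ℕ} (x y : Fin k → ℝ) : padLp p (x - y) = padLp p x - padLp p y := by
  simp only [padLp, Pi.sub_apply, lp.single_sub, Finset.sum_sub_distrib]

lemma norm_padLp {k : ℕ} (x : Fin k → ℝ) : ‖padLp p x‖ = ‖WithLp.toLp p x‖ := by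
  rcases eq_or_ne p ∞ with rfl | hp
  · refine le_antisymm (lp.norm_le_of_forall_le (norm_nonneg _) fun j => ?_) ?_
    · rw [padLp_apply]
      split_ifs
      · exact PiLp.norm_apply_le (WithLp.toLp ∞ x) _
      · simp
    · rw [PiLp.norm_toLp, pi_norm_le_iff_of_nonneg (norm_nonneg _)]
      intro i
      simpa [padLp_apply] using lp.norm_apply_le_norm ENNReal.top_ne_zero (padLp ∞ x) i
  · have hp' : 0 < p.toReal := ENNReal.toReal_pos (zero_lt_one.trans_le Fact.out).ne' hp
    rw [lp.norm_eq_tsum_rpow hp', PiLp.norm_eq_sum hp', tsum_eq_sum (s := Finset.range k),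
      ← Fin.sum_univ_eq_sum_range]
    · simp [padLp_apply]
    · intro j hj
      simp [padLp_apply, dif_neg (not_lt.2 (by simpa using hj)), hp'.ne']

lemma norm_toLp_mulVec_le {a c : ℕ} (A : Matrix (Fin c) (Fin a) ℝ) (v : Fin a → ℝ) :
    ‖WithLp.toLp p (A *ᵥ v)‖ ≤ ‖matCLM p A‖ * ‖WithLp.toLp p v‖ :=
  (matCLM p A).le_opNorm (WithLp.toLp p v)

lemma Ipad_mulVec_apply {a c : ℕ} (y : Fin a → ℝ) (i : Fin c) :
    (Ipad c a *ᵥ y) i = if h : (i : ℕ) < a then y ⟨i, h⟩ else 0 := by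
  simp only [Ipad, mulVec, dotProduct, Matrix.of_apply, ite_mul, one_mul, zero_mul]
  split_ifs with h
  · rw [Finset.sum_eq_single_of_mem ⟨i, h⟩ (Finset.mem_univ _)] <;> aesop
  · exact Finset.sum_eq_zero fun j _ => if_neg fun hj : (i : ℕ) = j => h (hj ▸ j.isLt)

lemma Ipad_mulVec_nonneg {a c : ℕ} {y : Fin a → ℝ} (hy : 0 ≤ y) : 0 ≤ Ipad c a *ᵥ y := by
  intro i
  rw [Ipad_mulVec_apply]
  split_ifs
  exacts [hy _, le_rfl]

lemma padLp_Ipad_mulVec {a c : ℕ} (h : a ≤ c) (y : Fin a → ℝ) :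
    padLp p (Ipad c a *ᵥ y) = padLp p y := by
  ext j
  simp only [padLp_apply, Ipad_mulVec_apply]
  split_ifs <;> first | rfl | omega

lemma norm_toLp_Ipad_mulVec {a c : ℕ} (h : a ≤ c) (y : Fin a → ℝ) :
    ‖WithLp.toLp p (Ipad c a *ᵥ y)‖ = ‖WithLp.toLp p y‖ := by
  rw [← norm_padLp, ← norm_padLp, padLp_Ipad_mulVec p h]

lemma relu_of_nonneg {k : ℕ} {v : Fin k → ℝ} (hv : 0 ≤ v) : relu v = v :=
  funext fun i => max_eq_left (hv i)

lemma relu_nonneg {k : ℕ} (v : Fin k → ℝ) : 0 ≤ relu v :=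
  fun _ => le_max_right _ _

lemma norm_toLp_relu_sub_relu_le {k : ℕ} (u v : Fin k → ℝ) :
    ‖WithLp.toLp p (relu u - relu v)‖ ≤ ‖WithLp.toLp p (u - v)‖ :=
  PiLp.norm_le_norm_of_forall_norm_le fun i => abs_max_sub_max_le_abs (u i) (v i) 0

end Padding

section Network

variable (p : ℝ≥0∞) [Fact (1 ≤ p)] {W P : ∀ n, Matrix (Fin (m (n+1))) (Fin (m n)) ℝ}
  {b : ∀ n, Fin (m (n+1)) → ℝ} {x : Fin (m 0) → ℝ}

lemma net_nonneg (hx : 0 ≤ x) : ∀ n, 0 ≤ net W b x n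
  | 0 => hx
  | _ + 1 => relu_nonneg _

lemma norm_toLp_net_succ_sub_le (hW : ∀ n, W n = Ipad (m (n+1)) (m n) + P n) (hx : 0 ≤ x)
    (n : ℕ) :
    ‖WithLp.toLp p (net W b x (n+1) - Ipad (m (n+1)) (m n) *ᵥ net W b x n)‖ ≤
      ‖matCLM p (P n)‖ * ‖WithLp.toLp p (net W b x n)‖ + ‖WithLp.toLp p (b n)‖ := by
  set y := net W b x n
  have hfix : relu (Ipad (m (n+1)) (m n) *ᵥ y) = Ipad (m (n+1)) (m n) *ᵥ y :=
    relu_of_nonneg (Ipad_mulVec_nonneg (net_nonneg hx n))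
  calc _ = ‖WithLp.toLp p (relu (Ipad (m (n+1)) (m n) *ᵥ y + (P n *ᵥ y + b n)) -
          relu (Ipad (m (n+1)) (m n) *ᵥ y))‖ := by
        rw [hfix, net, hW, add_mulVec, add_assoc]
    _ ≤ ‖WithLp.toLp p (P n *ᵥ y + b n)‖ :=
        (norm_toLp_relu_sub_relu_le p _ _).trans_eq (by rw [add_sub_cancel_left])
    _ ≤ _ := by
        rw [WithLp.toLp_add]
        exact (norm_add_le _ _).trans (by gcongr; exact norm_toLp_mulVec_le p _ _)

lemma norm_toLp_net_succ_le (hmono : ∀ n, m n ≤ m (n+1))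
    (hW : ∀ n, W n = Ipad (m (n+1)) (m n) + P n) (hx : 0 ≤ x) (n : ℕ) :
    ‖WithLp.toLp p (net W b x (n+1))‖ ≤
      (1 + ‖matCLM p (P n)‖) * ‖WithLp.toLp p (net W b x n)‖ + ‖WithLp.toLp p (b n)‖ := by
  have h := norm_le_norm_add_norm_sub' (WithLp.toLp p (net W b x (n+1)))
    (WithLp.toLp p (Ipad (m (n+1)) (m n) *ᵥ net W b x n))
  rw [← WithLp.toLp_sub, norm_toLp_Ipad_mulVec p (hmono n)] at h
  linarith [norm_toLp_net_succ_sub_le p (b := b) hW hx n]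

lemma dist_padLp_net_succ (hmono : ∀ n, m n ≤ m (n+1)) (n : ℕ) :
    dist (padLp p (net W b x n)) (padLp p (net W b x (n+1))) =
      ‖WithLp.toLp p (net W b x (n+1) - Ipad (m (n+1)) (m n) *ᵥ net W b x n)‖ := by
  rw [dist_comm, dist_eq_norm, ← padLp_Ipad_mulVec p (hmono n), ← padLp_sub, norm_padLp]

end Network

theorem stmt8_general (p : ℝ≥0∞) [Fact (1 ≤ p)] (m : ℕ → ℕ)
    (hmono : ∀ n, m n ≤ m (n+1))
    (W P : ∀ n, Matrix (Fin (m (n+1))) (Fin (m n)) ℝ)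
    (b : ∀ n, Fin (m (n+1)) → ℝ)
    (hW : ∀ n, W n = Ipad (m (n+1)) (m n) + P n)
    (hP : Summable fun n => ‖matCLM p (P n)‖)
    (hb : Summable fun n => ‖(WithLp.equiv p (Fin (m (n+1)) → ℝ)).symm (b n)‖) :
    ∀ x ∈ cube (m 0), ∃ L : lp (fun _ : ℕ => ℝ) p,
      Tendsto (fun n => padLp p (net W b x n)) atTop (nhds L) := by
  intro x hx
  have hx0 : 0 ≤ x := fun i => (hx i).1
  obtain ⟨M, hM⟩ := exists_forall_le_of_le_one_add_mul_add
    (a := fun n => ‖WithLp.toLp p (net W b x n)‖) (fun n => norm_nonneg _) (fun n => norm_nonneg _)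
    (norm_nonneg _) (norm_toLp_net_succ_le p hmono hW hx0) hP hb
  refine cauchySeq_tendsto_of_complete <|
    cauchySeq_of_dist_le_of_summable _ (fun n => ?_) ((hP.mul_right M).add hb)
  rw [dist_padLp_net_succ p hmono]
  exact (norm_toLp_net_succ_sub_le p hW hx0 n).trans (by gcongr; exacts [hM n, le_rfl])

theorem stmt8 (p : ℝ≥0∞) [Fact (1 ≤ p)] (m : ℕ → ℕ) (hpos : ∀ n, 0 < m n)
    (hmono : ∀ n, m n ≤ m (n+1))
    (W P : ∀ n, Matrix (Fin (m (n+1))) (Fin (m n)) ℝ)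
    (b : ∀ n, Fin (m (n+1)) → ℝ)
    (hW : ∀ n, W n = Ipad (m (n+1)) (m n) + P n)
    (hP : Summable fun n => ‖matCLM p (P n)‖)
    (hb : Summable fun n => ‖(WithLp.equiv p (Fin (m (n+1)) → ℝ)).symm (b n)‖) :
    ∀ x ∈ cube (m 0), ∃ L : lp (fun _ : ℕ => ℝ) p,
      Tendsto (fun n => padLp p (net W b x n)) atTop (nhds L) :=
  stmt8_general p m hmono W P b hW hP hb

end
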